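/- (Inequality (Pr3.1.5) in the proof of Theorem 2.1) Let {ε_n, n≥1} be {0,1}-valued random variables with S_n = ∑_{j=1}^n ε_j and S_n/n → λ in probability for a random variable λ with 0≤λ≤1 a.s. Fix positive integers k and s, let t ≥ 1 and K_s = {i : (s−1)t+1 ≤ i ≤ st}, and define the events B_{r,k} = {λ ∈ (r/2^k, (r+1)/2^k]} for 0 < r ≤ 2^k−1 and B_{0,k} = {λ ∈ [0, 2^{−k}]}. Then limsup_{t→∞} ∑_{r=0}^{2^k−1} E[ | (∑_{j∈K_s} ε_j)/t − r/2^k | · 1_{B_{r,k}} ] ≤ 1/2^k. -/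

import Mathlib

open MeasureTheory ProbabilityTheory Filter Finset

private def Ival (k r : ℕ) : Set ℝ :=
  if r = 0 then Set.Icc (0 : ℝ) (1 / 2 ^ k)
  else Set.Ioc ((r : ℝ) / 2 ^ k) (((r : ℝ) + 1) / 2 ^ k)

private lemma Ival_le {k r : ℕ} {x : ℝ} (hx : x ∈ Ival k r) :
    x ≤ ((r : ℝ) + 1) / 2 ^ k := by
  unfold Ival at hx
  split_ifs at hx with h
  · subst h; simpa using hx.2
  · exact hx.2

private lemma Ival_gt {k r : ℕ} {x : ℝ} (hr : r ≠ 0) (hx : x ∈ Ival k r) :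
    (r : ℝ) / 2 ^ k < x := by
  unfold Ival at hx; rw [if_neg hr] at hx; exact hx.1

private lemma Ival_disjoint {k r r' : ℕ} {x : ℝ} (hrr : r < r')
    (hx : x ∈ Ival k r) : x ∉ Ival k r' := by
  intro hx'
  have h2k : (0 : ℝ) < 2 ^ k := by positivity
  have h1 : x ≤ ((r : ℝ) + 1) / 2 ^ k := Ival_le hx
  have h2 : ((r' : ℝ)) / 2 ^ k < x := Ival_gt (by omega) hx'
  have h3 : ((r : ℝ) + 1) ≤ (r' : ℝ) := by exact_mod_cast hrr
  have h4 : ((r : ℝ) + 1) / 2 ^ k ≤ ((r' : ℝ)) / 2 ^ k := by gcongr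
  linarith

private lemma Ival_abs {k r : ℕ} {x : ℝ} (hx : x ∈ Ival k r) :
    |x - (r : ℝ) / 2 ^ k| ≤ 1 / 2 ^ k := by
  have h2k : (0 : ℝ) < 2 ^ k := by positivity
  have key : (r : ℝ) / 2 ^ k + 1 / 2 ^ k = ((r : ℝ) + 1) / 2 ^ k := by ring
  unfold Ival at hx
  split_ifs at hx with h
  · subst h
    simp only [Nat.cast_zero, zero_div, sub_zero]
    rw [abs_of_nonneg hx.1]
    simpa using hx.2
  · rw [abs_of_nonneg (by linarith [hx.1])]
    linarith [hx.2]

/-- **Inequality (Pr3.1.5)**: for the block `K_s = {(s−1)t+1, …, st}` and the events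
`B_{r,k} = {λ ∈ (r/2^k, (r+1)/2^k]}` (`r > 0`), `B_{0,k} = {λ ∈ [0, 2^{−k}]}`,
`limsup_{t→∞} ∑_{r=0}^{2^k−1} E[|(∑_{j∈K_s} ε_j)/t − r/2^k| · 1_{B_{r,k}}] ≤ 1/2^k`. -/
theorem inequality_Pr_3_1_5
    {Ω : Type*} [MeasureSpace Ω] [IsProbabilityMeasure (ℙ : Measure Ω)]
    (eps : ℕ → Ω → ℝ) (lam : Ω → ℝ)
    (hepsmeas : ∀ i, Measurable (eps i)) (hlammeas : Measurable lam)
    (heps01 : ∀ i ω, eps i ω = 0 ∨ eps i ω = 1)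
    (hlam01 : ∀ᵐ ω ∂ℙ, 0 ≤ lam ω ∧ lam ω ≤ 1)
    (hSn : TendstoInMeasure ℙ
      (fun n ω => (∑ j ∈ Finset.Icc 1 n, eps j ω) / (n : ℝ)) atTop lam)
    (k s : ℕ) (hk : 1 ≤ k) (hs : 1 ≤ s) :
    Filter.limsup (fun t : ℕ => ∑ r ∈ Finset.range (2 ^ k), ∫ ω,
      Set.indicator
        (if r = 0 then {ω' | lam ω' ∈ Set.Icc (0 : ℝ) (1 / 2 ^ k)}
          else {ω' | lam ω' ∈ Set.Ioc ((r : ℝ) / 2 ^ k) (((r : ℝ) + 1) / 2 ^ k)})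
        (fun ω' => |(∑ j ∈ Finset.Icc ((s - 1) * t + 1) (s * t), eps j ω') / (t : ℝ) -
          (r : ℝ) / 2 ^ k|) ω) atTop
      ≤ 1 / 2 ^ k := by
  have h2k : (0 : ℝ) < 2 ^ k := by positivity
  set T : ℕ → Ω → ℝ :=
    fun t ω => (∑ j ∈ Finset.Icc ((s - 1) * t + 1) (s * t), eps j ω) / (t : ℝ) with hTdef
  set F : ℕ → Ω → ℝ := fun n ω => (∑ j ∈ Finset.Icc 1 n, eps j ω) / (n : ℝ) with hFdef
  have hTmeas : ∀ t, Measurable (T t) := fun t =>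
    (Finset.measurable_sum _ fun j _ => hepsmeas j).div_const _
  -- arithmetic facts
  have hmulsub : ∀ t : ℕ, (s - 1) * t + t = s * t := by
    intro t
    rcases s with _ | s'
    · omega
    · simp [Nat.succ_mul]
  -- T is in [0,1]
  have hT01 : ∀ t, 1 ≤ t → ∀ ω, 0 ≤ T t ω ∧ T t ω ≤ 1 := by
    intro t ht ω
    have htR : (0 : ℝ) < t := by exact_mod_cast ht
    have hsum0 : 0 ≤ ∑ j ∈ Finset.Icc ((s - 1) * t + 1) (s * t), eps j ω :=
      Finset.sum_nonneg fun j _ => by rcases heps01 j ω with h | h <;> simp [h]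
    have hsum1 : ∑ j ∈ Finset.Icc ((s - 1) * t + 1) (s * t), eps j ω ≤ (t : ℝ) := by
      have hcard : (Finset.Icc ((s - 1) * t + 1) (s * t)).card = t := by
        rw [Nat.card_Icc]
        have := hmulsub t
        omega
      calc ∑ j ∈ Finset.Icc ((s - 1) * t + 1) (s * t), eps j ω
          ≤ ∑ j ∈ Finset.Icc ((s - 1) * t + 1) (s * t), 1 :=
            Finset.sum_le_sum fun j _ => by rcases heps01 j ω with h | h <;> simp [h]
        _ = (t : ℝ) := by rw [Finset.sum_const, hcard]; simp
    exact ⟨div_nonneg hsum0 htR.le, by rw [div_le_one htR]; exact hsum1⟩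
  -- representation of T via F
  have hTrep : ∀ t, 1 ≤ t → ∀ ω,
      T t ω - lam ω = (s : ℝ) * (F (s * t) ω - lam ω)
        - ((s : ℝ) - 1) * (F ((s - 1) * t) ω - lam ω) := by
    intro t ht ω
    have htR : (0 : ℝ) < t := by exact_mod_cast ht
    have hcast : ((s - 1 : ℕ) : ℝ) = (s : ℝ) - 1 := by
      rw [Nat.cast_sub hs]; simp
    have hsR : (0 : ℝ) < s := by exact_mod_cast hs
    have hsplit : (∑ j ∈ Finset.Icc 1 ((s - 1) * t), eps j ω)
        + ∑ j ∈ Finset.Icc ((s - 1) * t + 1) (s * t), eps j ω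
        = ∑ j ∈ Finset.Icc 1 (s * t), eps j ω := by
      have h1 : Finset.Icc 1 ((s - 1) * t) = Finset.Ioc 0 ((s - 1) * t) :=
        Finset.Icc_add_one_left_eq_Ioc 0 _
      have h2 : Finset.Icc ((s - 1) * t + 1) (s * t) = Finset.Ioc ((s - 1) * t) (s * t) :=
        Finset.Icc_add_one_left_eq_Ioc _ _
      have h3 : Finset.Icc 1 (s * t) = Finset.Ioc 0 (s * t) := Finset.Icc_add_one_left_eq_Ioc 0 _
      rw [h1, h2, h3]
      exact Finset.sum_Ioc_consecutive _ (Nat.zero_le _)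
        (by have := hmulsub t; omega)
    rcases eq_or_lt_of_le hs with hs1 | hs2
    · -- s = 1
      have hs1' : s = 1 := hs1.symm
      subst hs1'
      simp [hTdef, hFdef]
    · -- 2 ≤ s
      have hs2' : (2 : ℕ) ≤ s := hs2
      have hs1R : (0 : ℝ) < (s : ℝ) - 1 := by
        have : (2 : ℝ) ≤ (s : ℝ) := by exact_mod_cast hs2'
        linarith
      have hA : (F (s * t) ω) = (∑ j ∈ Finset.Icc 1 (s * t), eps j ω) / ((s : ℝ) * t) := by
        simp [hFdef, Nat.cast_mul]
      have hB : (F ((s - 1) * t) ω)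
          = (∑ j ∈ Finset.Icc 1 ((s - 1) * t), eps j ω) / (((s : ℝ) - 1) * t) := by
        simp only [hFdef, Nat.cast_mul, hcast]
      have hT' : T t ω = ((∑ j ∈ Finset.Icc 1 (s * t), eps j ω)
          - ∑ j ∈ Finset.Icc 1 ((s - 1) * t), eps j ω) / (t : ℝ) := by
        simp only [hTdef]
        rw [← hsplit]
        ring
      rw [hA, hB, hT']
      field_simp
      ring
  -- convergence in measure for T
  have hSn' : ∀ ε : ℝ, 0 < ε → Tendsto
      (fun n => ℙ {x | ε ≤ |F n x - lam x|}) atTop (nhds 0) := by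
    intro ε hε
    have := tendstoInMeasure_iff_dist.mp hSn ε hε
    simpa [Real.dist_eq, hFdef] using this
  have hP : ∀ c : ℝ, 0 < c →
      Tendsto (fun t => ℙ {ω | c ≤ |T t ω - lam ω|}) atTop (nhds 0) := by
    intro c hc
    have hsR : (0 : ℝ) < s := by exact_mod_cast hs
    have hc2s : 0 < c / (2 * s) := by positivity
    have hmulT : Tendsto (fun t : ℕ => s * t) atTop atTop :=
      tendsto_atTop_mono (fun t => Nat.le_mul_of_pos_left t hs) tendsto_id
    have h1 : Tendsto (fun t => ℙ {x | c / (2 * s) ≤ |F (s * t) x - lam x|})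
        atTop (nhds 0) := (hSn' _ hc2s).comp hmulT
    rcases eq_or_lt_of_le hs with hs1 | hs2
    · -- s = 1 : T t = F t
      have hs1' : s = 1 := hs1.symm
      subst hs1'
      have hTF : ∀ t ω, T t ω = F t ω := by
        intro t ω; simp [hTdef, hFdef]
      simpa [hTF] using hSn' c hc
    · -- 2 ≤ s
      have hs2' : (2 : ℕ) ≤ s := hs2
      have hs2R : (2 : ℝ) ≤ (s : ℝ) := by exact_mod_cast hs2'
      have hmulT' : Tendsto (fun t : ℕ => (s - 1) * t) atTop atTop :=
        tendsto_atTop_mono (fun t => Nat.le_mul_of_pos_left t (by omega)) tendsto_id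
      have h2 : Tendsto (fun t => ℙ {x | c / (2 * s) ≤ |F ((s - 1) * t) x - lam x|})
          atTop (nhds 0) := (hSn' _ hc2s).comp hmulT'
      have hadd : Tendsto (fun t => ℙ {x | c / (2 * s) ≤ |F (s * t) x - lam x|}
          + ℙ {x | c / (2 * s) ≤ |F ((s - 1) * t) x - lam x|}) atTop (nhds 0) := by
        simpa using h1.add h2
      apply tendsto_of_tendsto_of_tendsto_of_le_of_le' tendsto_const_nhds hadd
      · exact Eventually.of_forall fun t => zero_le
      · filter_upwards [eventually_ge_atTop 1] with t ht
        refine le_trans (measure_mono ?_) (measure_union_le _ _)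
        intro ω hω
        by_contra hno
        simp only [Set.mem_union, Set.mem_setOf_eq, not_or, not_le] at hno
        obtain ⟨ha, hb⟩ := hno
        have hωc : c ≤ |T t ω - lam ω| := hω
        rw [hTrep t ht ω] at hωc
        have habs : |(s : ℝ) * (F (s * t) ω - lam ω)
            - ((s : ℝ) - 1) * (F ((s - 1) * t) ω - lam ω)|
            ≤ (s : ℝ) * |F (s * t) ω - lam ω| + ((s : ℝ) - 1) * |F ((s - 1) * t) ω - lam ω| := by
          refine le_trans (abs_sub _ _) ?_
          rw [abs_mul, abs_mul, abs_of_nonneg (by positivity : (0:ℝ) ≤ (s:ℝ)),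
            abs_of_nonneg (by linarith : (0:ℝ) ≤ (s:ℝ) - 1)]
        have e1 : (s : ℝ) * |F (s * t) ω - lam ω| < (s : ℝ) * (c / (2 * s)) :=
          mul_lt_mul_of_pos_left ha hsR
        have e2 : ((s : ℝ) - 1) * |F ((s - 1) * t) ω - lam ω| ≤ ((s : ℝ) - 1) * (c / (2 * s)) :=
          mul_le_mul_of_nonneg_left hb.le (by linarith)
        have e3 : (s : ℝ) * (c / (2 * s)) = c / 2 := by field_simp
        have e4 : ((s : ℝ) - 1) * (c / (2 * s)) ≤ c / 2 := by
          rw [← e3]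
          exact mul_le_mul_of_nonneg_right (by linarith) hc2s.le
        linarith
  -- integrability of |T t - lam|
  have hIntAbs : ∀ t, 1 ≤ t → Integrable (fun ω => |T t ω - lam ω|) ℙ := by
    intro t ht
    refine Integrable.mono' (integrable_const 2)
      (((hTmeas t).sub hlammeas).abs.aestronglyMeasurable) ?_
    filter_upwards [hlam01] with ω hω
    have h1 := hT01 t ht ω
    rw [Real.norm_eq_abs, abs_abs, abs_le]
    constructor <;> [linarith [hω.2, h1.1]; linarith [hω.1, h1.2]]
  -- L¹ convergence
  have hg : Tendsto (fun t => ∫ ω, |T t ω - lam ω|) atTop (nhds 0) := by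
    rw [Metric.tendsto_nhds]
    intro ε hε
    have hPmeas : ∀ t, MeasurableSet {ω | ε / 2 ≤ |T t ω - lam ω|} := fun t =>
      measurableSet_le measurable_const ((hTmeas t).sub hlammeas).abs
    have hPε := hP (ε / 2) (by positivity)
    have hPtoReal : Tendsto (fun t => (ℙ {ω | ε / 2 ≤ |T t ω - lam ω|}).toReal)
        atTop (nhds 0) := by
      have := (ENNReal.tendsto_toReal (by simp)).comp hPε
      simpa [Function.comp_def] using this
    filter_upwards [hPtoReal.eventually (gt_mem_nhds (by linarith : (0:ℝ) < ε / 2)),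
      eventually_ge_atTop 1] with t hPt ht
    have hInt := hIntAbs t ht
    have hIndInt : Integrable
        (fun ω => ε / 2 + Set.indicator {ω | ε / 2 ≤ |T t ω - lam ω|} (fun _ => (1:ℝ)) ω) ℙ :=
      (integrable_const _).add ((integrable_const (1:ℝ)).indicator (hPmeas t))
    have hle : ∫ ω, |T t ω - lam ω|
        ≤ ε / 2 + (ℙ {ω | ε / 2 ≤ |T t ω - lam ω|}).toReal := by
      have step : ∫ ω, |T t ω - lam ω| ≤ ∫ ω, (ε / 2 +
          Set.indicator {ω | ε / 2 ≤ |T t ω - lam ω|} (fun _ => (1:ℝ)) ω) := by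
        refine integral_mono_ae hInt hIndInt ?_
        filter_upwards [hlam01] with ω hω
        by_cases hmem : ω ∈ {ω | ε / 2 ≤ |T t ω - lam ω|}
        · rw [Set.indicator_of_mem hmem]
          have h1 := hT01 t ht ω
          rw [abs_le]
          constructor <;> [skip; skip] <;>
            [linarith [hω.2, h1.1, hε]; linarith [hω.1, h1.2, hε]]
        · rw [Set.indicator_of_notMem hmem]
          simp only [Set.mem_setOf_eq, not_le] at hmem
          linarith
      rw [integral_add (integrable_const _) ((integrable_const (1:ℝ)).indicator (hPmeas t)),
        integral_const, integral_indicator_const _ (hPmeas t)] at step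
      simpa [measure_univ, measureReal_def] using step
    have hnn : 0 ≤ ∫ ω, |T t ω - lam ω| := integral_nonneg fun ω => abs_nonneg _
    rw [Real.dist_eq, sub_zero, abs_of_nonneg hnn]
    linarith
  -- the set identification
  have hBset : ∀ r : ℕ,
      (if r = 0 then {ω' | lam ω' ∈ Set.Icc (0 : ℝ) (1 / 2 ^ k)}
        else {ω' | lam ω' ∈ Set.Ioc ((r : ℝ) / 2 ^ k) (((r : ℝ) + 1) / 2 ^ k)})
      = lam ⁻¹' (Ival k r) := by
    intro r; unfold Ival; split_ifs <;> rfl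
  have hIvalMeas : ∀ r, MeasurableSet (Ival k r) := by
    intro r; unfold Ival; split_ifs
    · exact measurableSet_Icc
    · exact measurableSet_Ioc
  -- per-t bound
  have hbound : ∀ t, 1 ≤ t →
      (∑ r ∈ Finset.range (2 ^ k), ∫ ω, Set.indicator (lam ⁻¹' (Ival k r))
        (fun ω' => |T t ω' - (r : ℝ) / 2 ^ k|) ω)
      ≤ 1 / 2 ^ k + ∫ ω, |T t ω - lam ω| := by
    intro t ht
    have hint_r : ∀ r ∈ Finset.range (2 ^ k), Integrable
        (Set.indicator (lam ⁻¹' (Ival k r)) (fun ω' => |T t ω' - (r : ℝ) / 2 ^ k|)) ℙ := by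
      intro r _
      refine Integrable.indicator ?_ (hlammeas (hIvalMeas r))
      refine Integrable.mono' (integrable_const (1 + |(r : ℝ) / 2 ^ k|))
        (((hTmeas t).sub measurable_const).abs.aestronglyMeasurable) ?_
      refine Eventually.of_forall fun ω => ?_
      have h1 := hT01 t ht ω
      rw [Real.norm_eq_abs, abs_abs]
      calc |T t ω - (r : ℝ) / 2 ^ k| ≤ |T t ω| + |(r : ℝ) / 2 ^ k| := abs_sub _ _
        _ ≤ 1 + |(r : ℝ) / 2 ^ k| := by
            rw [abs_of_nonneg h1.1]; linarith [h1.2]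
    have hIntR : Integrable (fun ω => 1 / 2 ^ k + |T t ω - lam ω|) ℙ :=
      (integrable_const _).add (hIntAbs t ht)
    rw [← integral_finset_sum _ hint_r]
    have hptwise : ∀ ω, (∑ r ∈ Finset.range (2 ^ k), Set.indicator (lam ⁻¹' (Ival k r))
        (fun ω' => |T t ω' - (r : ℝ) / 2 ^ k|) ω) ≤ 1 / 2 ^ k + |T t ω - lam ω| := by
      intro ω
      by_cases hex : ∃ r ∈ Finset.range (2 ^ k), lam ω ∈ Ival k r
      · obtain ⟨r₀, hr₀m, hr₀⟩ := hex
        have hr₀' : ω ∈ lam ⁻¹' (Ival k r₀) := hr₀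
        rw [Finset.sum_eq_single_of_mem r₀ hr₀m ?_]
        · rw [Set.indicator_of_mem hr₀']
          have habs : |T t ω - (r₀ : ℝ) / 2 ^ k|
              ≤ |T t ω - lam ω| + |lam ω - (r₀ : ℝ) / 2 ^ k| := abs_sub_le _ _ _
          have := Ival_abs hr₀
          linarith
        · intro r hrm hrne
          apply Set.indicator_of_notMem
          rcases lt_or_gt_of_ne hrne with hlt | hgt
          · intro hmem
            exact Ival_disjoint hlt hmem hr₀
          · exact Ival_disjoint hgt hr₀
      · push_neg at hex
        have hex' : ∀ r ∈ Finset.range (2 ^ k), ω ∉ lam ⁻¹' (Ival k r) := hex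
        rw [Finset.sum_eq_zero fun r hr => Set.indicator_of_notMem (hex' r hr) _]
        positivity
    calc ∫ ω, (∑ r ∈ Finset.range (2 ^ k), Set.indicator (lam ⁻¹' (Ival k r))
            (fun ω' => |T t ω' - (r : ℝ) / 2 ^ k|) ω)
        ≤ ∫ ω, (1 / 2 ^ k + |T t ω - lam ω|) :=
          integral_mono (integrable_finset_sum _ hint_r) hIntR hptwise
      _ = 1 / 2 ^ k + ∫ ω, |T t ω - lam ω| := by
          rw [integral_add (integrable_const _) (hIntAbs t ht), integral_const]
          simp [measure_univ]
  -- assemble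
  have hupper : Tendsto (fun t => 1 / 2 ^ k + ∫ ω, |T t ω - lam ω|) atTop
      (nhds (1 / 2 ^ k : ℝ)) := by
    simpa using (tendsto_const_nhds : Tendsto (fun _ : ℕ => (1 / 2 ^ k : ℝ)) atTop _).add hg
  have hnn : ∀ t : ℕ, 0 ≤ ∑ r ∈ Finset.range (2 ^ k), ∫ ω, Set.indicator
      (if r = 0 then {ω' | lam ω' ∈ Set.Icc (0 : ℝ) (1 / 2 ^ k)}
        else {ω' | lam ω' ∈ Set.Ioc ((r : ℝ) / 2 ^ k) (((r : ℝ) + 1) / 2 ^ k)})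
      (fun ω' => |T t ω' - (r : ℝ) / 2 ^ k|) ω := by
    intro t
    refine Finset.sum_nonneg fun r _ => integral_nonneg fun ω => ?_
    exact Set.indicator_nonneg (fun ω' _ => abs_nonneg _) ω
  calc Filter.limsup (fun t : ℕ => ∑ r ∈ Finset.range (2 ^ k), ∫ ω, Set.indicator
        (if r = 0 then {ω' | lam ω' ∈ Set.Icc (0 : ℝ) (1 / 2 ^ k)}
          else {ω' | lam ω' ∈ Set.Ioc ((r : ℝ) / 2 ^ k) (((r : ℝ) + 1) / 2 ^ k)})
        (fun ω' => |T t ω' - (r : ℝ) / 2 ^ k|) ω) atTop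
      ≤ Filter.limsup (fun t => 1 / 2 ^ k + ∫ ω, |T t ω - lam ω|) atTop := by
        refine Filter.limsup_le_limsup ?_ ?_ ?_
        · filter_upwards [eventually_ge_atTop 1] with t ht
          simp only [hBset]
          exact hbound t ht
        · refine Filter.IsBoundedUnder.isCoboundedUnder_le ?_
          exact Filter.isBoundedUnder_of ⟨0, fun t => hnn t⟩
        · exact hupper.isBoundedUnder_le
    _ = 1 / 2 ^ k := hupper.limsup_eq
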